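/- arXiv:2111.12220 — 5 statements merged into one kernel-verified Lean document; each statement's English description precedes it below -/
import Mathlib

section
/- Let ρ, ρ₁, …, ρₙ (n ≥ 2) be d×d density matrices and p₁, …, pₙ real numbers with 0 < pₖ < 1 for each k, ∑ₖ pₖ = 1 and ρ = ∑ₖ pₖ ρₖ. For each k set Gₖ = (1 - pₖ) · C_{l1}((ρ - pₖ ρₖ)/(1 - pₖ)) and Aₖ = |Gₖ - pₖ C_{l1}(ρₖ)|. If the Aₖ are not all zero, then (∑ₖ Aₖ²)/(∑ₖ Aₖ) ≤ C_{l1}(ρ). -/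
open Matrix BigOperators
open scoped ComplexOrder

/-- The l1-norm of coherence: sum of absolute values of all off-diagonal entries. -/
noncomputable def Cl1 {d : ℕ} (ρ : Matrix (Fin d) (Fin d) ℂ) : ℝ :=
  ∑ i, ∑ j, if i ≠ j then ‖ρ i j‖ else 0

/-- A density matrix: positive semidefinite with trace 1. -/
def IsDensityMatrix {d : ℕ} (ρ : Matrix (Fin d) (Fin d) ℂ) : Prop :=
  ρ.PosSemidef ∧ ρ.trace = 1

/-- Rank-one outer product |ψ⟩⟨ψ|. -/
noncomputable def outer {d : ℕ} (ψ : Fin d → ℂ) : Matrix (Fin d) (Fin d) ℂ :=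
  Matrix.of fun i j => ψ i * (starRingEnd ℂ) (ψ j)

/-- ψ is a unit vector in ℂ^d. -/
def IsUnitVec {d : ℕ} (ψ : Fin d → ℂ) : Prop :=
  ∑ i, Complex.normSq (ψ i) = 1

/-- The convex-roof l1-norm of coherence. -/
noncomputable def convexRoofCl1 {d : ℕ} (ρ : Matrix (Fin d) (Fin d) ℂ) : ℝ :=
  sInf { c : ℝ | ∃ (n : ℕ) (p : Fin n → ℝ) (ψ : Fin n → Fin d → ℂ),
    (∀ i, 0 ≤ p i) ∧ (∑ i, p i) = 1 ∧ (∀ i, IsUnitVec (ψ i)) ∧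
    ρ = ∑ i, p i • outer (ψ i) ∧
    c = ∑ i, p i * Cl1 (outer (ψ i)) }

/-
The coefficient `Gₖ` is just `C_{l1}(ρ - pₖ ρₖ)`, since `C_{l1}` is absolutely homogeneous. As
`C_{l1}` is a seminorm and `ρ = (ρ - pₖ ρₖ) + pₖ ρₖ`, the reverse triangle inequality gives
`Aₖ ≤ C_{l1}(ρ)` for every `k`; the left-hand side is a weighted average of the `Aₖ` with weights
`Aₖ / ∑ₖ Aₖ`, hence also at most `C_{l1}(ρ)`.
-/

lemma Cl1_add_le {d : ℕ} (M N : Matrix (Fin d) (Fin d) ℂ) : Cl1 (M + N) ≤ Cl1 M + Cl1 N := by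
  unfold Cl1
  simp only [← Finset.sum_add_distrib]
  gcongr with i _ j _
  split_ifs
  · exact norm_add_le _ _
  · simp

lemma Cl1_smul {d : ℕ} (r : ℝ) (M : Matrix (Fin d) (Fin d) ℂ) : Cl1 (r • M) = ‖r‖ * Cl1 M := by
  simp only [Cl1, Finset.mul_sum, mul_ite, mul_zero, Matrix.smul_apply, norm_smul]

noncomputable def cl1Seminorm (d : ℕ) : Seminorm ℝ (Matrix (Fin d) (Fin d) ℂ) :=
  Seminorm.of Cl1 Cl1_add_le Cl1_smul

@[simp]
lemma coe_cl1Seminorm (d : ℕ) : ⇑(cl1Seminorm d) = Cl1 := rfl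

lemma abs_map_sub_sub_map_le {F α β : Type*} [FunLike F α β] [AddGroup α] [AddCommGroup β]
    [LinearOrder β] [IsOrderedAddMonoid β] [AddGroupSeminormClass F α β] (f : F) (x y : α) :
    |f (x - y) - f y| ≤ f x := by
  simpa [map_neg_eq_map] using abs_sub_map_le_sub f (x - y) (-y)

lemma Seminorm.mul_apply_inv_smul {E : Type*} [AddCommGroup E] [Module ℝ E] (f : Seminorm ℝ E)
    {t : ℝ} (ht : 0 < t) (x : E) : t * f (t⁻¹ • x) = f x := by
  rw [map_smul_eq_mul, norm_inv, Real.norm_of_nonneg ht.le, mul_inv_cancel_left₀ ht.ne']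

lemma Finset.sum_sq_div_sum_le {ι 𝕜 : Type*} [Field 𝕜] [LinearOrder 𝕜] [IsStrictOrderedRing 𝕜]
    (s : Finset ι) {a : ι → 𝕜} {c : 𝕜} (ha : ∀ i ∈ s, 0 ≤ a i) (hc : 0 ≤ c)
    (hac : ∀ i ∈ s, a i ≤ c) : (∑ i ∈ s, a i ^ 2) / ∑ i ∈ s, a i ≤ c := by
  rcases (Finset.sum_nonneg ha).eq_or_lt with hzero | hpos
  · simpa [← hzero] using hc
  rw [div_le_iff₀ hpos, Finset.mul_sum]
  refine Finset.sum_le_sum fun i hi => ?_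
  rw [sq]
  exact mul_le_mul_of_nonneg_right (hac i hi) (ha i hi)

theorem cl1_lower_bound_general {d n : ℕ}
    (ρ : Matrix (Fin d) (Fin d) ℂ) (ρs : Fin n → Matrix (Fin d) (Fin d) ℂ)
    (p : Fin n → ℝ)
    (hp : ∀ k, 0 < p k ∧ p k < 1)
    (G : Fin n → ℝ)
    (hG : ∀ k, G k = (1 - p k) * Cl1 ((1 - p k)⁻¹ • (ρ - p k • ρs k)))
    (A : Fin n → ℝ) (hA : ∀ k, A k = |G k - p k * Cl1 (ρs k)|) :
    (∑ k, (A k) ^ 2) / (∑ k, A k) ≤ Cl1 ρ := by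
  have hA_le : ∀ k, A k ≤ Cl1 ρ := fun k => by
    have hGk : G k = Cl1 (ρ - p k • ρs k) := by
      rw [hG k, ← coe_cl1Seminorm, Seminorm.mul_apply_inv_smul _ (sub_pos.2 (hp k).2)]
    have hpk : p k * Cl1 (ρs k) = Cl1 (p k • ρs k) := by
      rw [Cl1_smul, Real.norm_of_nonneg (hp k).1.le]
    rw [hA k, hGk, hpk, ← coe_cl1Seminorm]
    exact abs_map_sub_sub_map_le _ _ _
  refine Finset.sum_sq_div_sum_le _ (fun k _ => (hA k) ▸ abs_nonneg _) ?_ fun k _ => hA_le k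
  simpa using apply_nonneg (cl1Seminorm d) ρ

/-- Theorem 1 (lower bound): if A_k = |G_k - p_k C_{l1}(ρ_k)| are not all zero, then
    (∑ A_k²)/(∑ A_k) ≤ C_{l1}(ρ). -/
theorem cl1_lower_bound {d n : ℕ} (hn : 2 ≤ n)
    (ρ : Matrix (Fin d) (Fin d) ℂ) (ρs : Fin n → Matrix (Fin d) (Fin d) ℂ)
    (p : Fin n → ℝ)
    (hρ : IsDensityMatrix ρ) (hρs : ∀ k, IsDensityMatrix (ρs k))
    (hp : ∀ k, 0 < p k ∧ p k < 1) (hsum : ∑ k, p k = 1)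
    (hmix : ρ = ∑ k, p k • ρs k)
    (G : Fin n → ℝ)
    (hG : ∀ k, G k = (1 - p k) * Cl1 ((1 - p k)⁻¹ • (ρ - p k • ρs k)))
    (A : Fin n → ℝ) (hA : ∀ k, A k = |G k - p k * Cl1 (ρs k)|)
    (hA0 : ∃ k, A k ≠ 0) :
    (∑ k, (A k) ^ 2) / (∑ k, A k) ≤ Cl1 ρ :=
  cl1_lower_bound_general ρ ρs p hp G hG A hA
end

section
/- Let ρ be a d×d density matrix which can be written as ρ = ∑_{k=1}^{n} pₖ |ψₖ⟩⟨ψₖ| (n ≥ 2) with unit vectors ψₖ ∈ ℂ^d and pₖ ≥ 0, ∑ₖ pₖ = 1. Let s ≠ t be indices and set B = n(∑ₖ pₖ C_{l1}(|ψₖ⟩⟨ψₖ|) + 1). Then |ρ_{st}|²/B ≤ C̃_{l1}(ρ). -/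
open Matrix BigOperators
open scoped ComplexOrder

/-!
Every off-diagonal entry of a pure state is one of the terms of its l1-coherence, so by the triangle
inequality `|ρ_{st}|` is at most the average coherence of *any* decomposition of `ρ`, hence at most
`C̃_{l1}(ρ)`. The given decomposition also yields `|ρ_{st}| ≤ B`, and then `|ρ_{st}|² / B ≤ |ρ_{st}|`.
-/

lemma norm_apply_le_Cl1 {d : ℕ} (M : Matrix (Fin d) (Fin d) ℂ) {s t : Fin d} (hst : s ≠ t) :
    ‖M s t‖ ≤ Cl1 M := by
  have hterm : ∀ i j, 0 ≤ if i ≠ j then ‖M i j‖ else 0 := fun i j => by split <;> positivity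
  calc ‖M s t‖ = if s ≠ t then ‖M s t‖ else 0 := (if_pos hst).symm
    _ ≤ ∑ j, if s ≠ j then ‖M s j‖ else 0 :=
      Finset.single_le_sum (fun j _ => hterm s j) (Finset.mem_univ t)
    _ ≤ Cl1 M :=
      Finset.single_le_sum (fun i _ => Finset.sum_nonneg fun j _ => hterm i j) (Finset.mem_univ s)

lemma norm_apply_le_sum_mul_Cl1 {d : ℕ} {ι : Type*} [Fintype ι] (ρ : Matrix (Fin d) (Fin d) ℂ)
    (q : ι → ℝ) (M : ι → Matrix (Fin d) (Fin d) ℂ) (hq : ∀ i, 0 ≤ q i)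
    (hρ : ρ = ∑ i, q i • M i) {s t : Fin d} (hst : s ≠ t) :
    ‖ρ s t‖ ≤ ∑ i, q i * Cl1 (M i) := by
  have hentry : ρ s t = ∑ i, (q i : ℂ) * M i s t := by
    simp [hρ, Matrix.sum_apply, Complex.real_smul]
  calc ‖ρ s t‖ ≤ ∑ i, ‖(q i : ℂ) * M i s t‖ := hentry ▸ norm_sum_le _ _
    _ ≤ ∑ i, q i * Cl1 (M i) := Finset.sum_le_sum fun i _ => by
      rw [norm_mul, Complex.norm_of_nonneg (hq i)]
      exact mul_le_mul_of_nonneg_left (norm_apply_le_Cl1 _ hst) (hq i)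

lemma norm_apply_le_convexRoofCl1 {d n : ℕ} (ρ : Matrix (Fin d) (Fin d) ℂ)
    (p : Fin n → ℝ) (ψ : Fin n → Fin d → ℂ)
    (hp : ∀ k, 0 ≤ p k) (hsum : ∑ k, p k = 1) (hψ : ∀ k, IsUnitVec (ψ k))
    (hmix : ρ = ∑ k, p k • outer (ψ k)) {s t : Fin d} (hst : s ≠ t) :
    ‖ρ s t‖ ≤ convexRoofCl1 ρ := by
  refine le_csInf ⟨_, n, p, ψ, hp, hsum, hψ, hmix, rfl⟩ ?_
  rintro c ⟨m, q, φ, hq, -, -, hρ, rfl⟩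
  exact norm_apply_le_sum_mul_Cl1 ρ q _ hq hρ hst

lemma sq_div_le_self {x B : ℝ} (hx : 0 ≤ x) (hxB : x ≤ B) : x ^ 2 / B ≤ x :=
  div_le_of_le_mul₀ (hx.trans hxB) hx (by rw [pow_two]; exact mul_le_mul_of_nonneg_left hxB hx)

theorem convexRoofCl1_lower_bound_general {d n : ℕ}
    (ρ : Matrix (Fin d) (Fin d) ℂ)
    (p : Fin n → ℝ) (ψ : Fin n → Fin d → ℂ)
    (hp : ∀ k, 0 ≤ p k) (hsum : ∑ k, p k = 1) (hψ : ∀ k, IsUnitVec (ψ k))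
    (hmix : ρ = ∑ k, p k • outer (ψ k))
    (s t : Fin d) (hst : s ≠ t)
    (B : ℝ) (hB : B = (n : ℝ) * ((∑ k, p k * Cl1 (outer (ψ k))) + 1)) :
    ‖ρ s t‖ ^ 2 / B ≤ convexRoofCl1 ρ := by
  have hn : (1 : ℝ) ≤ n := by
    norm_cast
    exact Nat.pos_of_ne_zero (by rintro rfl; simp at hsum)
  have hS : ‖ρ s t‖ ≤ ∑ k, p k * Cl1 (outer (ψ k)) := norm_apply_le_sum_mul_Cl1 ρ p _ hp hmix hst
  have hB' : ‖ρ s t‖ ≤ B := by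
    rw [hB]
    nlinarith [norm_nonneg (ρ s t)]
  calc ‖ρ s t‖ ^ 2 / B ≤ ‖ρ s t‖ := sq_div_le_self (norm_nonneg _) hB'
    _ ≤ convexRoofCl1 ρ := norm_apply_le_convexRoofCl1 ρ p ψ hp hsum hψ hmix hst

/-- Theorem 4 (lower bound): |ρ_{st}|²/B ≤ C̃_{l1}(ρ). -/
theorem convexRoofCl1_lower_bound {d n : ℕ} (hn : 2 ≤ n)
    (ρ : Matrix (Fin d) (Fin d) ℂ) (hρ : IsDensityMatrix ρ)
    (p : Fin n → ℝ) (ψ : Fin n → Fin d → ℂ)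
    (hp : ∀ k, 0 ≤ p k) (hsum : ∑ k, p k = 1) (hψ : ∀ k, IsUnitVec (ψ k))
    (hmix : ρ = ∑ k, p k • outer (ψ k))
    (s t : Fin d) (hst : s ≠ t)
    (B : ℝ) (hB : B = (n : ℝ) * ((∑ k, p k * Cl1 (outer (ψ k))) + 1)) :
    ‖ρ s t‖ ^ 2 / B ≤ convexRoofCl1 ρ :=
  convexRoofCl1_lower_bound_general ρ p ψ hp hsum hψ hmix s t hst B hB
end

section
/- Let ρ be a d×d density matrix which can be written as ρ = ∑_{k=1}^{n} pₖ |ψₖ⟩⟨ψₖ| (n ≥ 2) with unit vectors ψₖ ∈ ℂ^d and real numbers 0 < pₖ < 1, ∑ₖ pₖ = 1. For each k set G̃ₖ = (1 - pₖ) · C̃_{l1}((ρ - pₖ |ψₖ⟩⟨ψₖ|)/(1 - pₖ)). Then (1/n) ∑ₖ [G̃ₖ + pₖ C_{l1}(|ψₖ⟩⟨ψₖ|)] ≤ ∑ₖ pₖ C_{l1}(|ψₖ⟩⟨ψₖ|); that is, the upper bound (1/n) ∑ₖ [G̃ₖ + pₖ C_{l1}(|ψₖ⟩⟨ψₖ|)]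 on C̃_{l1}(ρ) is at most the bound ∑ₖ pₖ C_{l1}(|ψₖ⟩⟨ψₖ|). -/
open Matrix BigOperators
open scoped ComplexOrder

/-!
Dropping the `k`-th pure state from the decomposition of `ρ` and renormalising the remaining
weights by `1 - p k` gives a decomposition of `(1 - p k)⁻¹ • (ρ - p k • |ψ_k⟩⟨ψ_k|)`, so the
convex roof gives `G k ≤ ∑ⱼ pⱼ C_{l1}(ψⱼ) - p k C_{l1}(ψ_k)`. Hence every summand
`G k + p k C_{l1}(ψ_k)` is at most `∑ⱼ pⱼ C_{l1}(ψⱼ)`, and so is their average.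
-/

theorem Fintype.sum_update_zero_smul {ι R M : Type*} [Fintype ι] [DecidableEq ι] [Semiring R]
    [AddCommGroup M] [Module R M] (p : ι → R) (v : ι → M) (k : ι) :
    ∑ j, Function.update p k 0 j • v j = ∑ j, p j • v j - p k • v k := by
  have hupdate : (fun j => Function.update p k 0 j • v j) =
      Function.update (fun j => p j • v j) k 0 := by
    ext j
    rcases eq_or_ne j k with rfl | hj <;> simp [*]
  rw [hupdate, Finset.sum_update_of_mem (Finset.mem_univ k), Fintype.sum_eq_add_sum_compl k,
    Finset.compl_eq_univ_sdiff]
  abel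

theorem Cl1_nonneg {d : ℕ} (ρ : Matrix (Fin d) (Fin d) ℂ) : 0 ≤ Cl1 ρ :=
  Finset.sum_nonneg fun _ _ => Finset.sum_nonneg fun _ _ => by split <;> positivity

theorem convexRoofCl1_le {d n : ℕ} (q : Fin n → ℝ) (φ : Fin n → Fin d → ℂ)
    (hq : ∀ i, 0 ≤ q i) (hqsum : ∑ i, q i = 1) (hφ : ∀ i, IsUnitVec (φ i)) :
    convexRoofCl1 (∑ i, q i • outer (φ i)) ≤ ∑ i, q i * Cl1 (outer (φ i)) := by
  refine csInf_le ⟨0, ?_⟩ ⟨n, q, φ, hq, hqsum, hφ, rfl, rfl⟩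
  rintro c ⟨m, r, χ, hr, -, -, -, rfl⟩
  exact Finset.sum_nonneg fun i _ => mul_nonneg (hr i) (Cl1_nonneg _)

theorem convexRoofCl1_remove_component_le {d n : ℕ} (p : Fin n → ℝ) (ψ : Fin n → Fin d → ℂ)
    (hp : ∀ j, 0 ≤ p j) (hsum : ∑ j, p j = 1) (hψ : ∀ j, IsUnitVec (ψ j)) {k : Fin n}
    (hk : p k < 1) :
    (1 - p k) * convexRoofCl1 ((1 - p k)⁻¹ • (∑ j, p j • outer (ψ j) - p k • outer (ψ k))) ≤
      ∑ j, p j * Cl1 (outer (ψ j)) - p k * Cl1 (outer (ψ k)) := by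
  have hk' : 0 < 1 - p k := sub_pos.mpr hk
  set q : Fin n → ℝ := (1 - p k)⁻¹ • Function.update p k 0
  have hq : ∀ j, 0 ≤ q j := fun j => by
    rcases eq_or_ne j k with rfl | hj
    · simp [q]
    · simpa [q, hj] using mul_nonneg (inv_nonneg.mpr hk'.le) (hp j)
  have hqsum : ∑ j, q j = 1 := by
    have h := Fintype.sum_update_zero_smul p (fun _ => (1 : ℝ)) k
    simp only [smul_eq_mul, mul_one] at h
    simp only [q, Pi.smul_apply, smul_eq_mul, ← Finset.mul_sum, h, hsum]
    exact inv_mul_cancel₀ hk'.ne'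
  have hdecomp : (1 - p k)⁻¹ • (∑ j, p j • outer (ψ j) - p k • outer (ψ k)) =
      ∑ j, q j • outer (ψ j) := by
    simp only [q, Pi.smul_apply, smul_eq_mul, mul_smul, ← Finset.smul_sum,
      Fintype.sum_update_zero_smul]
  have hcoh : ∑ j, q j * Cl1 (outer (ψ j)) =
      (1 - p k)⁻¹ * (∑ j, p j * Cl1 (outer (ψ j)) - p k * Cl1 (outer (ψ k))) := by
    simpa only [q, Pi.smul_apply, smul_eq_mul, mul_assoc, ← Finset.mul_sum] using
      congrArg ((1 - p k)⁻¹ * ·) (Fintype.sum_update_zero_smul p (fun j => Cl1 (outer (ψ j))) k)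
  rw [hdecomp]
  calc (1 - p k) * convexRoofCl1 (∑ j, q j • outer (ψ j))
      ≤ (1 - p k) * ∑ j, q j * Cl1 (outer (ψ j)) :=
        mul_le_mul_of_nonneg_left (convexRoofCl1_le q ψ hq hqsum hψ) hk'.le
    _ = _ := by rw [hcoh, mul_inv_cancel_left₀ hk'.ne']

theorem convexRoofCl1_upper_bound_comparison_general {d n : ℕ} (hn : 2 ≤ n)
    (ρ : Matrix (Fin d) (Fin d) ℂ)
    (p : Fin n → ℝ) (ψ : Fin n → Fin d → ℂ)
    (hp : ∀ k, 0 < p k ∧ p k < 1) (hsum : ∑ k, p k = 1) (hψ : ∀ k, IsUnitVec (ψ k))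
    (hmix : ρ = ∑ k, p k • outer (ψ k))
    (G : Fin n → ℝ)
    (hG : ∀ k, G k = (1 - p k) * convexRoofCl1 ((1 - p k)⁻¹ • (ρ - p k • outer (ψ k)))) :
    (1 / (n : ℝ)) * ∑ k, (G k + p k * Cl1 (outer (ψ k))) ≤ ∑ k, p k * Cl1 (outer (ψ k)) := by
  set S := ∑ k, p k * Cl1 (outer (ψ k))
  have hterm : ∀ k, G k + p k * Cl1 (outer (ψ k)) ≤ S := fun k => by
    have h := convexRoofCl1_remove_component_le p ψ (fun j => (hp j).1.le) hsum hψ (hp k).2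
    rw [hG k, hmix]
    linarith
  have hn' : (0 : ℝ) < n := by exact_mod_cast (by omega : 0 < n)
  calc (1 / (n : ℝ)) * ∑ k, (G k + p k * Cl1 (outer (ψ k)))
      ≤ (1 / n) * (n * S) := by
        gcongr
        simpa using Finset.sum_le_card_nsmul Finset.univ _ S fun k _ => hterm k
    _ = S := by field_simp

/-- Theorem 5: the upper bound of Theorem 4 is at most ∑_k p_k C_{l1}(|ψ_k⟩⟨ψ_k|). -/
theorem convexRoofCl1_upper_bound_comparison {d n : ℕ} (hn : 2 ≤ n)
    (ρ : Matrix (Fin d) (Fin d) ℂ) (hρ : IsDensityMatrix ρ)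
    (p : Fin n → ℝ) (ψ : Fin n → Fin d → ℂ)
    (hp : ∀ k, 0 < p k ∧ p k < 1) (hsum : ∑ k, p k = 1) (hψ : ∀ k, IsUnitVec (ψ k))
    (hmix : ρ = ∑ k, p k • outer (ψ k))
    (G : Fin n → ℝ)
    (hG : ∀ k, G k = (1 - p k) * convexRoofCl1 ((1 - p k)⁻¹ • (ρ - p k • outer (ψ k)))) :
    (1 / (n : ℝ)) * ∑ k, (G k + p k * Cl1 (outer (ψ k))) ≤ ∑ k, p k * Cl1 (outer (ψ k)) :=
  convexRoofCl1_upper_bound_comparison_general hn ρ p ψ hp hsum hψ hmix G hG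
end

section
/- For every d-dimensional density matrix ρ (d ≥ 1), C_{l1}(ρ) ≤ d - 1. -/
open Matrix BigOperators
open scoped ComplexOrder

/- The diagonal of a positive semidefinite matrix dominates its off-diagonal part entrywise,
`2 |ρᵢⱼ| ≤ ρᵢᵢ + ρⱼⱼ` (from the nonnegative 2 × 2 principal minors and AM-GM); summed over
the `d (d - 1)` off-diagonal positions, each diagonal entry is counted `d - 1` times. -/

namespace Matrix.PosSemidef

variable {n 𝕜 : Type*} [RCLike 𝕜] {A : Matrix n n 𝕜}

theorem norm_apply_sq_le (hA : A.PosSemidef) (i j : n) :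
    ‖A i j‖ ^ 2 ≤ RCLike.re (A i i) * RCLike.re (A j j) := by
  have hminor := (hA.submatrix ![i, j]).det_nonneg
  rw [det_fin_two, RCLike.nonneg_iff] at hminor
  simp only [submatrix_apply, cons_val_zero, cons_val_one, ← hA.isHermitian.apply j i,
    RCLike.star_def, RCLike.mul_conj] at hminor
  have hii := RCLike.nonneg_iff.mp (hA.diag_nonneg (i := i))
  have hjj := RCLike.nonneg_iff.mp (hA.diag_nonneg (i := j))
  have hre := hminor.1
  rw [map_sub, RCLike.mul_re, hii.2, hjj.2, ← RCLike.ofReal_pow, RCLike.ofReal_re] at hre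
  linarith

theorem two_mul_norm_apply_le (hA : A.PosSemidef) (i j : n) :
    2 * ‖A i j‖ ≤ RCLike.re (A i i) + RCLike.re (A j j) := by
  have hii := (RCLike.nonneg_iff.mp (hA.diag_nonneg (i := i))).1
  have hjj := (RCLike.nonneg_iff.mp (hA.diag_nonneg (i := j))).1
  nlinarith [hA.norm_apply_sq_le i j, sq_nonneg (RCLike.re (A i i) - RCLike.re (A j j)),
    norm_nonneg (A i j)]

end Matrix.PosSemidef

theorem Fintype.sum_sum_ite_ne_add_div_two {ι : Type*} [Fintype ι] [DecidableEq ι] (a : ι → ℝ) :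
    ∑ i, ∑ j, (if i ≠ j then (a i + a j) / 2 else 0) = (Fintype.card ι - 1) * ∑ i, a i := by
  have hrow (i : ι) : ∑ j, (if i ≠ j then (a i + a j) / 2 else 0)
      = ∑ j, (a i + a j) / 2 - a i := by
    rw [← Finset.sum_filter, Finset.filter_ne, eq_sub_iff_add_eq,
      ← Finset.sum_erase_add _ (fun j => (a i + a j) / 2) (Finset.mem_univ i), add_self_div_two]
  simp_rw [hrow, Finset.sum_sub_distrib, ← Finset.sum_div, Finset.sum_add_distrib,
    Finset.sum_const, Finset.card_univ, nsmul_eq_mul, ← Finset.mul_sum]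
  ring

theorem Cl1_le_mul_re_trace {d : ℕ} {ρ : Matrix (Fin d) (Fin d) ℂ} (hρ : ρ.PosSemidef) :
    Cl1 ρ ≤ ((d : ℝ) - 1) * ρ.trace.re :=
  calc Cl1 ρ ≤ ∑ i, ∑ j, if i ≠ j then ((ρ i i).re + (ρ j j).re) / 2 else 0 := by
        unfold Cl1
        gcongr with i _ j _
        split_ifs
        · exact (le_div_iff₀' two_pos).mpr (hρ.two_mul_norm_apply_le i j)
        · rfl
    _ = ((d : ℝ) - 1) * ρ.trace.re := by
        rw [Fintype.sum_sum_ite_ne_add_div_two, Fintype.card_fin, trace, Complex.re_sum]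
        rfl

theorem cl1_le_dim_sub_one_general {d : ℕ}
    (ρ : Matrix (Fin d) (Fin d) ℂ) (hρ : IsDensityMatrix ρ) :
    Cl1 ρ ≤ (d : ℝ) - 1 := by
  simpa [hρ.2] using Cl1_le_mul_re_trace hρ.1

/-- Lemma 6: for any d-dimensional density matrix, C_{l1}(ρ) ≤ d - 1. -/
theorem cl1_le_dim_sub_one {d : ℕ} (hd : 1 ≤ d)
    (ρ : Matrix (Fin d) (Fin d) ℂ) (hρ : IsDensityMatrix ρ) :
    Cl1 ρ ≤ (d : ℝ) - 1 :=
  cl1_le_dim_sub_one_general ρ hρ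
end

section
/- Let ρ be a d-dimensional density matrix with d ≥ 2, and suppose there exist indices i ≠ j with ρ_{ij} = 0. Set μ = tr(ρ²) - ∑_{k=1}^{d} ρ_{kk}² (equivalently, μ = ∑ₖ λₖ² - ∑ₖ ρ_{kk}², where λ₁, …, λ_d are the eigenvalues of ρ). Then C_{l1}(ρ) ≤ √([d(d-1) - 1] · μ). -/
open Matrix BigOperators
open scoped ComplexOrder

/-!
For Hermitian `ρ`, `μ = tr(ρ²) - ∑ₖ ρₖₖ²` is the sum of `|ρ_pq|²` over the `d(d-1)` off-diagonal
positions. One of them vanishes, so Cauchy–Schwarz over the remaining `d(d-1) - 1` positions gives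
`C_{l1}(ρ)² ≤ (d(d-1) - 1) μ`.
-/

open Finset

namespace Finset

variable {ι α : Type*}

theorem sum_offDiag_eq_sum_sub_sum_diag [AddCommGroup α] [DecidableEq ι] (s : Finset ι)
    (f : ι × ι → α) :
    ∑ p ∈ s.offDiag, f p = ∑ i ∈ s, ∑ j ∈ s, f (i, j) - ∑ i ∈ s, f (i, i) := by
  rw [← sum_product', ← diag_union_offDiag, sum_union (disjoint_diag_offDiag s), diag, sum_map]
  simp

theorem sum_offDiag_eq_sum_ite [AddCommMonoid α] [DecidableEq ι] (s : Finset ι) (f : ι × ι → α) :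
    ∑ p ∈ s.offDiag, f p = ∑ i ∈ s, ∑ j ∈ s, if i ≠ j then f (i, j) else 0 := by
  rw [← sum_product' (f := fun i j ↦ if i ≠ j then f (i, j) else 0), ← sum_filter]
  congr 1
  ext
  simp [and_assoc]

theorem sq_sum_le_card_sub_one_mul_sum_sq [Ring α] [LinearOrder α] [IsStrictOrderedRing α]
    {s : Finset ι} {f : ι → α} {x : ι} (hx : x ∈ s) (hfx : f x = 0) :
    (∑ i ∈ s, f i) ^ 2 ≤ (#s - 1 : α) * ∑ i ∈ s, f i ^ 2 := by
  classical
  have hcard : (#(s.erase x) : α) = #s - 1 := by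
    rw [card_erase_of_mem hx, Nat.cast_pred (card_pos.2 ⟨x, hx⟩)]
  calc (∑ i ∈ s, f i) ^ 2 = (∑ i ∈ s.erase x, f i) ^ 2 := by rw [sum_erase _ hfx]
    _ ≤ #(s.erase x) * ∑ i ∈ s.erase x, f i ^ 2 := sq_sum_le_card_mul_sum_sq
    _ ≤ (#s - 1 : α) * ∑ i ∈ s, f i ^ 2 := by
      rw [← hcard]
      exact mul_le_mul_of_nonneg_left
        (sum_le_sum_of_subset_of_nonneg (erase_subset x s) fun i _ _ ↦ sq_nonneg (f i))
        (Nat.cast_nonneg _)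

end Finset

namespace Matrix.IsHermitian

variable {n 𝕜 : Type*} [RCLike 𝕜] {A : Matrix n n 𝕜}

theorem re_apply_self_sq (hA : A.IsHermitian) (i : n) : RCLike.re (A i i) ^ 2 = ‖A i i‖ ^ 2 := by
  rw [← sq_abs, ← RCLike.norm_ofReal (K := 𝕜), hA.coe_re_apply_self]

variable [Fintype n]

theorem re_trace_mul_self (hA : A.IsHermitian) :
    RCLike.re (A * A).trace = ∑ i, ∑ j, ‖A i j‖ ^ 2 := by
  have hsq (i j : n) : A i j * A j i = ((‖A i j‖ ^ 2 : ℝ) : 𝕜) := by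
    rw [← hA.apply j i, RCLike.star_def, RCLike.mul_conj, RCLike.ofReal_pow]
  simp only [trace, diag_apply, mul_apply, hsq, map_sum, RCLike.ofReal_re]

theorem sum_offDiag_norm_sq [DecidableEq n] (hA : A.IsHermitian) :
    ∑ p ∈ univ.offDiag, ‖A p.1 p.2‖ ^ 2 = RCLike.re (A * A).trace - ∑ i, RCLike.re (A i i) ^ 2 := by
  rw [sum_offDiag_eq_sum_sub_sum_diag, hA.re_trace_mul_self]
  simp only [hA.re_apply_self_sq]

end Matrix.IsHermitian

theorem cl1_eq_sum_offDiag {d : ℕ} (ρ : Matrix (Fin d) (Fin d) ℂ) :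
    Cl1 ρ = ∑ p ∈ univ.offDiag, ‖ρ p.1 p.2‖ := by
  rw [Cl1, sum_offDiag_eq_sum_ite]

theorem cl1_le_sqrt_bound_general {d : ℕ}
    (ρ : Matrix (Fin d) (Fin d) ℂ) (hρ : IsDensityMatrix ρ)
    (i j : Fin d) (hij : i ≠ j) (h0 : ρ i j = 0)
    (μ : ℝ) (hμ : μ = (Matrix.trace (ρ * ρ)).re - ∑ k, ((ρ k k).re) ^ 2) :
    Cl1 ρ ≤ Real.sqrt (((d : ℝ) * ((d : ℝ) - 1) - 1) * μ) := by
  have hcard : (#(univ : Finset (Fin d)).offDiag : ℝ) = d * (d - 1) := by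
    rw [offDiag_card, Nat.cast_sub (Nat.le_mul_self _), card_univ, Fintype.card_fin]
    push_cast
    ring
  have hμ_offDiag : μ = ∑ p ∈ univ.offDiag, ‖ρ p.1 p.2‖ ^ 2 :=
    hμ.trans (hρ.1.isHermitian.sum_offDiag_norm_sq).symm
  rw [cl1_eq_sum_offDiag, hμ_offDiag, ← hcard]
  exact Real.le_sqrt_of_sq_le <|
    sq_sum_le_card_sub_one_mul_sum_sq (x := (i, j)) (by simpa using hij) (by simpa using h0)

/-- Theorem 8 (first inequality): if some off-diagonal entry of ρ vanishes, then
    C_{l1}(ρ) ≤ √([d(d-1) - 1]·μ) with μ = tr(ρ²) - ∑_k ρ_{kk}². -/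
theorem cl1_le_sqrt_bound {d : ℕ} (hd : 2 ≤ d)
    (ρ : Matrix (Fin d) (Fin d) ℂ) (hρ : IsDensityMatrix ρ)
    (i j : Fin d) (hij : i ≠ j) (h0 : ρ i j = 0)
    (μ : ℝ) (hμ : μ = (Matrix.trace (ρ * ρ)).re - ∑ k, ((ρ k k).re) ^ 2) :
    Cl1 ρ ≤ Real.sqrt (((d : ℝ) * ((d : ℝ) - 1) - 1) * μ) :=
  cl1_le_sqrt_bound_general ρ hρ i j hij h0 μ hμ
end
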